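/- Let p be a prime, n a positive integer, and let C_1, C_2 be codes of length n over Z_p with C_1 ⊆ C_2 ⊆ C_1^⊥; when p = 2, assume further that C_1 is doubly even. If dim C_1 = k_1 and dim C_2 = k_1 + k_2, then the number of self-orthogonal codes C of length n over Z_{p^2} such that π(C) = C_1 and ι^{-1}(C) = C_2 is p^{k_1(2n−3k_1−1−2k_2)/2} if p is odd, and 2^{k_1(2n−3k_1+1−2k_2)/2} if p = 2. -/

import Mathlib

/-! Fix a basis `e₁, …, e_k` of `C₁` and lift it canonically to `ẽᵢ` over `ℤ/p²`. A code `C`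
with `π(C) = C₁` and `ι⁻¹(C) = C₂` is generated by `ι(C₂)` together with lifts `ẽᵢ + ι(xᵢ)`,
and `C` determines the tuple `x` exactly modulo `C₂ᵏ`. Such a code is self-orthogonal iff
`eⱼ·xᵢ + eᵢ·xⱼ = -Bᵢⱼ`, where `p Bᵢⱼ = ẽᵢ·ẽⱼ`. The map `x ↦ (eⱼ·xᵢ)ᵢⱼ` is onto the `k × k`
matrices with a kernel of dimension `k (n - k)`, and for symmetric `M` the equation
`Y + Yᵀ = M` has `p^(k(k-1)/2)` solutions when `p` is odd. When `p = 2` the diagonal of `Y` is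
free, which is possible only because `B` has zero diagonal, i.e. because `C₁` is doubly even.
Dividing by `|C₂|ᵏ = p^(k(k₁+k₂))` gives the count. -/

open scoped BigOperators

set_option maxHeartbeats 1000000

namespace Paper

/-- Self-orthogonality of a set of vectors w.r.t. the standard inner product. -/
def sorth {m : ℕ} {ι : Type} [Fintype ι] (S : Set (ι → ZMod m)) : Prop :=
  ∀ x ∈ S, ∀ y ∈ S, ∑ i, x i * y i = 0

/-- The dual (as a set) of a set of vectors w.r.t. the standard inner product. -/
def dualSet {m : ℕ} {ι : Type} [Fintype ι] (S : Set (ι → ZMod m)) : Set (ι → ZMod m) :=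
  {x | ∀ y ∈ S, ∑ i, x i * y i = 0}

/-- A set of vectors is doubly even if every element has Hamming weight divisible by 4. -/
def doublyEven {m : ℕ} {ι : Type} [Fintype ι] (S : Set (ι → ZMod m)) : Prop :=
  ∀ x ∈ S, 4 ∣ (Finset.univ.filter fun i => x i ≠ 0).card

/-- Coordinatewise reduction map `(Z_{p^2})^ι → (Z_p)^ι`. -/
def res (p : ℕ) [Fact p.Prime] {ι : Type} (v : ι → ZMod (p ^ 2)) : ι → ZMod p :=
  fun i => ZMod.castHom (dvd_pow_self p (by norm_num)) (ZMod p) (v i)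

/-- The injection `(Z_p)^ι → (Z_{p^2})^ι` induced by `Z_p ≅ pZ_{p^2} ⊆ Z_{p^2}`. -/
def iot (p : ℕ) {ι : Type} (v : ι → ZMod p) : ι → ZMod (p ^ 2) :=
  fun i => (p : ZMod (p ^ 2)) * (ZMod.cast (v i))

/-- Coordinatewise reduction map `(Z_4)^ι → (Z_2)^ι`. -/
def res4 {ι : Type} (v : ι → ZMod 4) : ι → ZMod 2 :=
  fun i => ZMod.castHom (by norm_num : (2:ℕ) ∣ 4) (ZMod 2) (v i)

/-- The injection `(Z_2)^ι → (Z_4)^ι`. -/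
def iot4 {ι : Type} (v : ι → ZMod 2) : ι → ZMod 4 :=
  fun i => (2 : ZMod 4) * (ZMod.cast (v i))

/-- Euclidean weight on `Z_4`. -/
def ewt (x : ZMod 4) : ℕ := if x = 0 then 0 else if x = 2 then 4 else 1

/-- A quaternary code is even if every codeword has Euclidean weight divisible by 8. -/
def evenCode {ι : Type} [Fintype ι] (S : Set (ι → ZMod 4)) : Prop :=
  ∀ x ∈ S, 8 ∣ ∑ i, ewt (x i)

/-- The code over `Z_q` generated by the rows of an integer matrix. -/
def intRowSpan (q : ℕ) {κ ι : Type} (G : Matrix κ ι ℤ) :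
    Submodule (ZMod q) (ι → ZMod q) :=
  Submodule.span (ZMod q) (Set.range fun i => fun c => ((G i c : ℤ) : ZMod q))

/-- The Gaussian binomial coefficient `[n choose k]_p`. -/
def gauss (p n k : ℕ) : ℚ :=
  ∏ i ∈ Finset.range k, ((p : ℚ) ^ n - (p : ℚ) ^ i) / ((p : ℚ) ^ k - (p : ℚ) ^ i)

open Matrix Submodule

section ZModSq

variable (p : ℕ) [Fact p.Prime]

abbrev reduce : ZMod (p ^ 2) →+* ZMod p := ZMod.castHom (dvd_pow_self p two_ne_zero) (ZMod p)

instance : RingHomSurjective (reduce p) := ⟨ZMod.castHom_surjective _⟩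

theorem reduce_cast (b : ZMod p) : reduce p (b.cast : ZMod (p ^ 2)) = b := by
  rw [ZMod.castHom_apply]
  exact ZMod.cast_cast_zmod_of_le (Nat.le_self_pow two_ne_zero p) b

/-- For `reduce p z = 0`, this is the `b` with `z = p * b`. -/
def divP (z : ZMod (p ^ 2)) : ZMod p := (z.val / p : ℕ)

theorem natCast_mul_cast_divP {z : ZMod (p ^ 2)} (hz : reduce p z = 0) :
    (p : ZMod (p ^ 2)) * (divP p z).cast = z := by
  have hdvd : p ∣ z.val := by
    rwa [ZMod.castHom_apply, ZMod.cast_eq_val, ZMod.natCast_eq_zero_iff] at hz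
  have hlt : z.val / p < p := Nat.div_lt_of_lt_mul (by simpa [sq] using ZMod.val_lt z)
  rw [divP, ZMod.cast_eq_val, ZMod.val_natCast, Nat.mod_eq_of_lt hlt, ← Nat.cast_mul,
    Nat.mul_div_cancel' hdvd, ZMod.natCast_zmod_val]

theorem natCast_mul_eq_natCast_mul_cast_reduce (z : ZMod (p ^ 2)) :
    (p : ZMod (p ^ 2)) * z = p * (reduce p z).cast := by
  have hw : reduce p (z - (reduce p z).cast) = 0 := by rw [map_sub, reduce_cast, sub_self]
  have hp2 : (p : ZMod (p ^ 2)) * p = 0 := by rw [← Nat.cast_mul, ← sq, ZMod.natCast_self]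
  rw [← sub_eq_zero, ← mul_sub, ← natCast_mul_cast_divP p hw, ← mul_assoc, hp2, zero_mul]

/-- `iot` on a single coordinate. It is additive although `ZMod.cast` is not, because `p * z`
only depends on `z` modulo `p`. -/
def iotHom : ZMod p →+ ZMod (p ^ 2) where
  toFun b := p * b.cast
  map_zero' := by simp
  map_add' a b := by
    rw [← mul_add, natCast_mul_eq_natCast_mul_cast_reduce p (_ + _), map_add, reduce_cast,
      reduce_cast]

theorem iotHom_apply (b : ZMod p) : iotHom p b = p * b.cast := rfl

theorem iotHom_divP {z : ZMod (p ^ 2)} (hz : reduce p z = 0) : iotHom p (divP p z) = z :=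
  natCast_mul_cast_divP p hz

theorem mul_iotHom (z : ZMod (p ^ 2)) (b : ZMod p) :
    z * iotHom p b = iotHom p (reduce p z * b) := by
  rw [iotHom_apply, iotHom_apply, mul_left_comm, natCast_mul_eq_natCast_mul_cast_reduce, map_mul,
    reduce_cast]

theorem reduce_iotHom (b : ZMod p) : reduce p (iotHom p b) = 0 := by
  rw [iotHom_apply, map_mul, map_natCast, ZMod.natCast_self, zero_mul]

theorem iotHom_injective : Function.Injective (iotHom p) := by
  rw [injective_iff_map_eq_zero]
  intro b hb
  rw [iotHom_apply, ← ZMod.natCast_val, ← Nat.cast_mul, ZMod.natCast_eq_zero_iff, sq] at hb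
  rw [← ZMod.natCast_zmod_val b, ZMod.natCast_eq_zero_iff]
  exact Nat.dvd_of_mul_dvd_mul_left (Fact.out : p.Prime).pos hb

end ZModSq

section Vectors

variable (p : ℕ) [Fact p.Prime] {ι : Type}

theorem iot_apply (v : ι → ZMod p) (t : ι) : iot p v t = iotHom p (v t) := rfl

theorem iot_add (u v : ι → ZMod p) : iot p (u + v) = iot p u + iot p v :=
  map_add ((iotHom p).compLeft ι) u v

theorem iot_sub (u v : ι → ZMod p) : iot p (u - v) = iot p u - iot p v :=
  map_sub ((iotHom p).compLeft ι) u v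

theorem iot_zero : iot p (0 : ι → ZMod p) = 0 := map_zero ((iotHom p).compLeft ι)

theorem iot_sum {κ : Type} (s : Finset κ) (f : κ → ι → ZMod p) :
    iot p (∑ i ∈ s, f i) = ∑ i ∈ s, iot p (f i) :=
  map_sum ((iotHom p).compLeft ι) f s

theorem iot_injective : Function.Injective (iot p : (ι → ZMod p) → ι → ZMod (p ^ 2)) :=
  fun _ _ h => funext fun t => iotHom_injective p (congrFun h t)

theorem res_apply (v : ι → ZMod (p ^ 2)) (t : ι) : res p v t = reduce p (v t) := rfl

def resₛₗ : (ι → ZMod (p ^ 2)) →ₛₗ[reduce p] ι → ZMod p where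
  toFun := res p
  map_add' u v := funext fun t => map_add (reduce p) (u t) (v t)
  map_smul' a u := funext fun t => map_mul (reduce p) a (u t)

theorem coe_resₛₗ : ⇑(resₛₗ p : (ι → ZMod (p ^ 2)) →ₛₗ[reduce p] ι → ZMod p) = res p := rfl

theorem res_iot (v : ι → ZMod p) : res p (iot p v) = 0 :=
  funext fun t => reduce_iotHom p (v t)

theorem smul_iot (a : ZMod (p ^ 2)) (v : ι → ZMod p) : a • iot p v = iot p (reduce p a • v) :=
  funext fun t => mul_iotHom p a (v t)

theorem iotHom_smul (b : ZMod p) (u : ι → ZMod (p ^ 2)) : iotHom p b • u = iot p (b • res p u) :=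
  funext fun t => by
    rw [Pi.smul_apply, smul_eq_mul, mul_comm, mul_iotHom, iot_apply, Pi.smul_apply, smul_eq_mul,
      mul_comm, res_apply]

theorem iot_divP_of_res_eq_zero {u : ι → ZMod (p ^ 2)} (hu : res p u = 0) :
    iot p (fun t => divP p (u t)) = u :=
  funext fun t => iotHom_divP p (congrFun hu t)

def lift (v : ι → ZMod p) : ι → ZMod (p ^ 2) := fun t => (v t).cast

theorem res_lift (v : ι → ZMod p) : res p (lift p v) = v :=
  funext fun t => reduce_cast p (v t)

variable [Fintype ι]

theorem dotProduct_iot (u : ι → ZMod (p ^ 2)) (w : ι → ZMod p) :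
    u ⬝ᵥ iot p w = iotHom p (res p u ⬝ᵥ w) := by
  simp only [dotProduct, iot_apply, mul_iotHom, map_sum, res_apply]

theorem iot_dotProduct (w : ι → ZMod p) (u : ι → ZMod (p ^ 2)) :
    iot p w ⬝ᵥ u = iotHom p (w ⬝ᵥ res p u) := by
  rw [dotProduct_comm, dotProduct_iot, dotProduct_comm]

theorem iot_dotProduct_iot (v w : ι → ZMod p) : iot p v ⬝ᵥ iot p w = 0 := by
  rw [dotProduct_iot, res_iot, zero_dotProduct, map_zero]

end Vectors

theorem sorth_span_iff {m : ℕ} {ι : Type} [Fintype ι] (T : Set (ι → ZMod m)) :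
    sorth (span (ZMod m) T : Set (ι → ZMod m)) ↔ ∀ u ∈ T, ∀ v ∈ T, u ⬝ᵥ v = 0 := by
  refine ⟨fun h u hu v hv => h u (subset_span hu) v (subset_span hv), fun h x hx y hy => ?_⟩
  change x ⬝ᵥ y = 0
  induction hx, hy using Submodule.span_induction₂ with
  | mem_mem u v hu hv => exact h u hu v hv
  | zero_left v hv => exact zero_dotProduct v
  | zero_right u hu => exact dotProduct_zero u
  | add_left u v w _ _ _ h1 h2 => exact (add_dotProduct u v w).trans (by rw [h1, h2, add_zero])
  | add_right u v w _ _ _ h1 h2 => exact (dotProduct_add u v w).trans (by rw [h1, h2, add_zero])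
  | smul_left a u v _ _ h1 => exact (smul_dotProduct a u v).trans (by rw [h1, smul_zero])
  | smul_right a u v _ _ h1 => exact (dotProduct_smul a u v).trans (by rw [h1, smul_zero])

section LiftCode

variable (p : ℕ) [Fact p.Prime] {ι κ : Type}
  (C2 : Submodule (ZMod p) (ι → ZMod p)) (e : κ → ι → ZMod p)

theorem eq_of_le_of_res_image_of_iot_preimage {D C : Submodule (ZMod (p ^ 2)) (ι → ZMod (p ^ 2))}
    (hle : D ≤ C) (hres : res p '' (C : Set (ι → ZMod (p ^ 2))) ⊆ res p '' D)
    (hiot : iot p ⁻¹' (C : Set (ι → ZMod (p ^ 2))) ⊆ iot p ⁻¹' D) :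
    D = C := by
  refine le_antisymm hle fun z hz => ?_
  obtain ⟨d, hd, hdz⟩ := hres ⟨z, hz, rfl⟩
  have h0 : res p (z - d) = 0 := by rw [← coe_resₛₗ, map_sub, coe_resₛₗ, hdz, sub_self]
  have hzd : iot p (fun t => divP p ((z - d) t)) ∈ D := by
    refine hiot ?_
    rw [Set.mem_preimage, iot_divP_of_res_eq_zero p h0]
    exact C.sub_mem hz (hle hd)
  rw [iot_divP_of_res_eq_zero p h0] at hzd
  simpa using D.add_mem hzd hd

def iotSubmodule : Submodule (ZMod (p ^ 2)) (ι → ZMod (p ^ 2)) where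
  carrier := iot p '' C2
  add_mem' := by
    rintro _ _ ⟨u, hu, rfl⟩ ⟨v, hv, rfl⟩
    exact ⟨u + v, C2.add_mem hu hv, iot_add p u v⟩
  zero_mem' := ⟨0, C2.zero_mem, iot_zero p⟩
  smul_mem' := by
    rintro a _ ⟨v, hv, rfl⟩
    exact ⟨reduce p a • v, C2.smul_mem _ hv, (smul_iot p a v).symm⟩

def liftGen (x : κ → ι → ZMod p) (i : κ) : ι → ZMod (p ^ 2) := lift p (e i) + iot p (x i)

def liftCode (x : κ → ι → ZMod p) : Submodule (ZMod (p ^ 2)) (ι → ZMod (p ^ 2)) :=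
  span (ZMod (p ^ 2)) (Set.range (liftGen p e x)) ⊔ iotSubmodule p C2

variable {e}

theorem res_liftGen (x : κ → ι → ZMod p) (i : κ) : res p (liftGen p e x i) = e i := by
  rw [liftGen, ← coe_resₛₗ, map_add, coe_resₛₗ, res_lift, res_iot, add_zero]

theorem iot_mem_liftCode {x : κ → ι → ZMod p} {v : ι → ZMod p} (hv : v ∈ C2) :
    iot p v ∈ liftCode p C2 e x :=
  mem_sup_right ⟨v, hv, rfl⟩

theorem sorth_liftCode_iff [Fintype ι] (horth : ∀ c ∈ C2, ∀ i, c ⬝ᵥ e i = 0)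
    {x : κ → ι → ZMod p} :
    sorth (liftCode p C2 e x : Set (ι → ZMod (p ^ 2))) ↔
      ∀ i j, liftGen p e x i ⬝ᵥ liftGen p e x j = 0 := by
  have hspan :
      liftCode p C2 e x = span (ZMod (p ^ 2)) (Set.range (liftGen p e x) ∪ iot p '' C2) := by
    rw [span_union, liftCode]
    congr
    exact (span_eq (iotSubmodule p C2)).symm
  have hgen_iot : ∀ i, ∀ c ∈ C2, liftGen p e x i ⬝ᵥ iot p c = 0 := fun i c hc => by
    rw [dotProduct_iot, res_liftGen, dotProduct_comm, horth c hc, map_zero]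
  rw [hspan, sorth_span_iff]
  refine ⟨fun h i j => h _ (Or.inl ⟨i, rfl⟩) _ (Or.inl ⟨j, rfl⟩), ?_⟩
  rintro h _ (⟨i, rfl⟩ | ⟨c, hc, rfl⟩) _ (⟨j, rfl⟩ | ⟨d, hd, rfl⟩)
  · exact h i j
  · exact hgen_iot i d hd
  · rw [dotProduct_comm]
    exact hgen_iot j c hc
  · exact iot_dotProduct_iot p c d

theorem map_resₛₗ_iotSubmodule : (iotSubmodule p C2).map (resₛₗ p) = ⊥ := by
  rw [eq_bot_iff, map_le_iff_le_comap]
  rintro _ ⟨v, _, rfl⟩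
  exact res_iot p v

theorem res_image_liftCode (x : κ → ι → ZMod p) :
    res p '' liftCode p C2 e x = (span (ZMod p) (Set.range e) : Set (ι → ZMod p)) := by
  rw [← coe_resₛₗ, ← map_coe, liftCode, Submodule.map_sup, map_span, map_resₛₗ_iotSubmodule,
    sup_bot_eq, ← Set.range_comp, show ⇑(resₛₗ p) ∘ liftGen p e x = e from funext (res_liftGen p x)]

theorem exists_liftCode_eq {C : Submodule (ZMod (p ^ 2)) (ι → ZMod (p ^ 2))}
    (hres : res p '' (C : Set (ι → ZMod (p ^ 2))) =
      (span (ZMod p) (Set.range e) : Set (ι → ZMod p)))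
    (hiot : iot p ⁻¹' (C : Set (ι → ZMod (p ^ 2))) = C2) :
    ∃ x, liftCode p C2 e x = C := by
  have hlift : ∀ i, ∃ g ∈ C, res p g = e i :=
    fun i => show e i ∈ res p '' C from hres ▸ subset_span ⟨i, rfl⟩
  choose g hgC hg using hlift
  set x : κ → ι → ZMod p := fun i t => divP p ((g i - lift p (e i)) t)
  have hgen : ∀ i, liftGen p e x i = g i := fun i => by
    have h0 : res p (g i - lift p (e i)) = 0 := by
      rw [← coe_resₛₗ, map_sub, coe_resₛₗ, hg, res_lift, sub_self]
    rw [liftGen, iot_divP_of_res_eq_zero p h0, add_sub_cancel]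
  refine ⟨x, eq_of_le_of_res_image_of_iot_preimage p ?_ ?_ ?_⟩
  · rw [liftCode, sup_le_iff, span_le, Set.range_subset_iff]
    refine ⟨fun i => (hgen i).symm ▸ hgC i, ?_⟩
    rintro _ ⟨v, hv, rfl⟩
    exact (hiot.symm ▸ hv : v ∈ iot p ⁻¹' C)
  · rw [hres, res_image_liftCode]
  · rw [hiot]
    exact fun v hv => iot_mem_liftCode p C2 hv

variable [Fintype κ]

/-- Reducing a combination of the `liftGen p e x i` to zero forces its coefficients into
`p ZMod (p ^ 2)`, since the `e i` are independent. -/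
theorem exists_iot_eq_of_mem_span_liftGen (he : LinearIndependent (ZMod p) e)
    {x : κ → ι → ZMod p} {y : ι → ZMod (p ^ 2)}
    (hy : y ∈ span (ZMod (p ^ 2)) (Set.range (liftGen p e x))) (hres : res p y = 0) :
    ∃ w ∈ span (ZMod p) (Set.range e), iot p w = y := by
  obtain ⟨a, rfl⟩ := (mem_span_range_iff_exists_fun _).mp hy
  have ha : ∀ i, reduce p (a i) = 0 := by
    refine Fintype.linearIndependent_iff.mp he _ ?_
    rw [← hres, ← coe_resₛₗ, map_sum]
    simp only [map_smulₛₗ, coe_resₛₗ, res_liftGen]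
  refine ⟨∑ i, divP p (a i) • e i, sum_mem fun i _ => smul_mem _ _ (subset_span ⟨i, rfl⟩), ?_⟩
  rw [iot_sum]
  refine Finset.sum_congr rfl fun i _ => ?_
  rw [← res_liftGen (e := e) p x i, ← iotHom_smul, iotHom_divP p (ha i)]

theorem iot_mem_liftCode_iff (he : LinearIndependent (ZMod p) e) (heC : ∀ i, e i ∈ C2)
    {x : κ → ι → ZMod p} {v : ι → ZMod p} : iot p v ∈ liftCode p C2 e x ↔ v ∈ C2 := by
  refine ⟨fun hv => ?_, iot_mem_liftCode p C2⟩
  obtain ⟨y, hy, _, ⟨c, hc, rfl⟩, hyc⟩ := mem_sup.mp hv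
  have hres : res p y = 0 := by
    rw [eq_sub_of_add_eq hyc, ← coe_resₛₗ, map_sub, coe_resₛₗ, res_iot, res_iot, sub_zero]
  obtain ⟨w, hw, rfl⟩ := exists_iot_eq_of_mem_span_liftGen p he hy hres
  rw [← iot_add] at hyc
  rw [← iot_injective p hyc]
  exact add_mem (span_le.mpr (Set.range_subset_iff.mpr heC) hw) hc

theorem liftCode_le_liftCode_iff (he : LinearIndependent (ZMod p) e) (heC : ∀ i, e i ∈ C2)
    {x x' : κ → ι → ZMod p} : liftCode p C2 e x' ≤ liftCode p C2 e x ↔ ∀ i, x' i - x i ∈ C2 := by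
  have hgen : ∀ i, liftGen p e x' i = liftGen p e x i + iot p (x' i - x i) := fun i => by
    rw [liftGen, liftGen, iot_sub]
    abel
  have hmem : ∀ i, liftGen p e x i ∈ liftCode p C2 e x :=
    fun i => mem_sup_left (subset_span ⟨i, rfl⟩)
  rw [liftCode, sup_le_iff, span_le, Set.range_subset_iff]
  simp only [SetLike.mem_coe, hgen, add_mem_cancel_left (hmem _),
    iot_mem_liftCode_iff p C2 he heC]
  exact and_iff_left le_sup_right

theorem liftCode_eq_liftCode_iff (he : LinearIndependent (ZMod p) e) (heC : ∀ i, e i ∈ C2)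
    {x x' : κ → ι → ZMod p} :
    liftCode p C2 e x' = liftCode p C2 e x ↔ x' - x ∈ pi Set.univ fun _ => C2 := by
  rw [le_antisymm_iff, liftCode_le_liftCode_iff p C2 he heC, liftCode_le_liftCode_iff p C2 he heC,
    mem_pi]
  refine ⟨fun h i _ => h.1 i, fun h => ⟨fun i => h i trivial, fun i => ?_⟩⟩
  rw [← neg_sub]
  exact C2.neg_mem (h i trivial)

theorem setOf_codes_eq_image_liftCode [Fintype ι] (he : LinearIndependent (ZMod p) e)
    (heC : ∀ i, e i ∈ C2) :
    {C : Submodule (ZMod (p ^ 2)) (ι → ZMod (p ^ 2)) | sorth (C : Set (ι → ZMod (p ^ 2))) ∧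
        res p '' (C : Set (ι → ZMod (p ^ 2))) = (span (ZMod p) (Set.range e) : Set (ι → ZMod p)) ∧
        iot p ⁻¹' (C : Set (ι → ZMod (p ^ 2))) = C2} =
      liftCode p C2 e '' {x | sorth (liftCode p C2 e x : Set (ι → ZMod (p ^ 2)))} := by
  ext C
  constructor
  · rintro ⟨hs, hres, hiot⟩
    obtain ⟨x, rfl⟩ := exists_liftCode_eq p C2 hres hiot
    exact ⟨x, hs, rfl⟩
  · rintro ⟨x, hs, rfl⟩
    exact ⟨hs, res_image_liftCode p C2 x, Set.ext fun v => iot_mem_liftCode_iff p C2 he heC⟩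

end LiftCode

section Counting

theorem ncard_eq_ncard_image_mul {α β : Type} [Finite α] (f : α → β) (s : Set α) {m : ℕ}
    (hfib : ∀ a ∈ s, {a' ∈ s | f a' = f a}.ncard = m) : s.ncard = (f '' s).ncard * m := by
  classical
  obtain ⟨t, rfl⟩ := s.toFinite.exists_finset_coe
  rw [← Finset.coe_image, Set.ncard_coe_finset, Set.ncard_coe_finset,
    Finset.card_eq_sum_card_image f t]
  refine Finset.sum_const_nat fun b hb => ?_
  obtain ⟨a, ha, rfl⟩ := Finset.mem_image.mp hb
  rw [← hfib a ha, ← Set.ncard_coe_finset, Finset.coe_filter]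
  rfl

variable {R M N : Type} [Ring R] [AddCommGroup M] [Module R M] [AddCommGroup N] [Module R N]

theorem ncard_setOf_sub_mem (W : Submodule R M) (x₀ : M) :
    {x | x - x₀ ∈ W}.ncard = Nat.card W := by
  have hcoset : {x | x - x₀ ∈ W} = (x₀ + ·) '' W :=
    Set.ext fun x => ⟨fun h => ⟨x - x₀, h, add_sub_cancel x₀ x⟩, by rintro ⟨y, hy, rfl⟩; simpa⟩
  rw [hcoset, Set.ncard_image_of_injective _ (add_right_injective x₀)]
  exact (Nat.card_coe_set_eq (W : Set M)).symm

theorem ncard_preimage_of_surjective [Finite M] {f : M →ₗ[R] N} (hf : Function.Surjective f)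
    (S : Set N) : (f ⁻¹' S).ncard = S.ncard * Nat.card (LinearMap.ker f) := by
  rw [ncard_eq_ncard_image_mul f _ fun x hx => ?_, Set.image_preimage_eq S hf]
  rw [← ncard_setOf_sub_mem (LinearMap.ker f) x]
  congr 1
  ext y
  simp only [Set.mem_preimage, LinearMap.mem_ker, map_sub, sub_eq_zero]
  exact and_iff_right_of_imp fun h => h ▸ hx

theorem natCard_pi_univ (W : Submodule R M) (κ : Type) [Fintype κ] :
    Nat.card (pi Set.univ fun _ : κ => W) = Nat.card W ^ Fintype.card κ := by
  rw [Nat.card_congr ((Equiv.subtypeEquivRight fun x => by simp [mem_pi]).trans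
    (Equiv.subtypePiEquivPi (p := fun _ y => y ∈ W))), Nat.card_fun,
    Nat.card_eq_fintype_card (α := κ)]

end Counting

section LinearAlgebra

variable {K ι κ : Type} [Field K] [Fintype ι] [Fintype κ]

theorem mulVecLin_surjective_of_linearIndependent {e : κ → ι → K} (he : LinearIndependent K e) :
    Function.Surjective (Matrix.of e).mulVecLin := by
  rw [← LinearMap.range_eq_top]
  refine Submodule.eq_top_of_finrank_eq ?_
  rw [Module.finrank_fintype_fun_eq_card]
  exact LinearIndependent.rank_matrix (M := Matrix.of e) he

theorem finrank_add_card_le_card {e : κ → ι → K} (he : LinearIndependent K e)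
    {W : Submodule K (ι → K)} (horth : ∀ c ∈ W, ∀ i, c ⬝ᵥ e i = 0) :
    Module.finrank K W + Fintype.card κ ≤ Fintype.card ι := by
  have hker : W ≤ LinearMap.ker (Matrix.of e).mulVecLin :=
    fun c hc => funext fun j => (dotProduct_comm _ _).trans (horth c hc j)
  have hrank := LinearMap.finrank_range_add_finrank_ker (Matrix.of e).mulVecLin
  rw [LinearMap.range_eq_top.mpr (mulVecLin_surjective_of_linearIndependent he), finrank_top,
    Module.finrank_fintype_fun_eq_card, Module.finrank_fintype_fun_eq_card] at hrank
  have := Submodule.finrank_mono hker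
  omega

theorem natCard_ker_of_surjective {V W : Type} [AddCommGroup V] [Module K V] [AddCommGroup W]
    [Module K W] [FiniteDimensional K V] {f : V →ₗ[K] W} (hf : Function.Surjective f) :
    Nat.card (LinearMap.ker f) = Nat.card K ^ (Module.finrank K V - Module.finrank K W) := by
  have hrank := LinearMap.finrank_range_add_finrank_ker f
  rw [LinearMap.range_eq_top.mpr hf, finrank_top] at hrank
  rw [Module.natCard_eq_pow_finrank (K := K)]
  congr 1
  omega

end LinearAlgebra

section CodeCount

variable (p : ℕ) [Fact p.Prime] {ι κ : Type} [Fintype ι] {e : κ → ι → ZMod p}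

/-- Only meaningful when the `e i` are pairwise orthogonal, so that `p` divides the Gram matrix
of their lifts. -/
def divGram (e : κ → ι → ZMod p) (i j : κ) : ZMod p := divP p (lift p (e i) ⬝ᵥ lift p (e j))

theorem divGram_comm (i j : κ) : divGram p e i j = divGram p e j i := by
  rw [divGram, dotProduct_comm, divGram]

theorem liftGen_dotProduct_liftGen (hee : ∀ i j, e i ⬝ᵥ e j = 0) (x : κ → ι → ZMod p) (i j : κ) :
    liftGen p e x i ⬝ᵥ liftGen p e x j =
      iotHom p (divGram p e i j + (e j ⬝ᵥ x i + e i ⬝ᵥ x j)) := by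
  have hgram : iotHom p (divGram p e i j) = lift p (e i) ⬝ᵥ lift p (e j) := by
    refine iotHom_divP p ?_
    rw [RingHom.map_dotProduct]
    exact (congrArg₂ _ (res_lift p (e i)) (res_lift p (e j))).trans (hee i j)
  rw [liftGen, liftGen, add_dotProduct, dotProduct_add, dotProduct_add, iot_dotProduct_iot,
    dotProduct_iot, iot_dotProduct, res_lift, res_lift, map_add, map_add, hgram,
    dotProduct_comm (x i)]
  abel

variable [Fintype κ] (C2 : Submodule (ZMod p) (ι → ZMod p))

theorem ncard_sorth_liftCode (he : LinearIndependent (ZMod p) e) (heC : ∀ i, e i ∈ C2)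
    (horth : ∀ c ∈ C2, ∀ i, c ⬝ᵥ e i = 0) :
    {x | sorth (liftCode p C2 e x : Set (ι → ZMod (p ^ 2)))}.ncard =
      {Y : κ → κ → ZMod p | ∀ i j, Y i j + Y j i = -divGram p e i j}.ncard *
        p ^ (Fintype.card κ * Fintype.card ι - Fintype.card κ * Fintype.card κ) := by
  set ψ := (Matrix.of e).mulVecLin.compLeft κ
  have hψ : Function.Surjective ψ := (mulVecLin_surjective_of_linearIndependent he).comp_left
  have hset : {x | sorth (liftCode p C2 e x : Set (ι → ZMod (p ^ 2)))} =
      ψ ⁻¹' {Y | ∀ i j, Y i j + Y j i = -divGram p e i j} := by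
    ext x
    simp only [Set.mem_preimage, sorth_liftCode_iff p C2 horth,
      liftGen_dotProduct_liftGen p (fun i j => horth _ (heC i) j),
      map_eq_zero_iff _ (iotHom_injective p), eq_neg_iff_add_eq_zero, add_comm (divGram p e _ _)]
    rfl
  rw [hset, ncard_preimage_of_surjective hψ, natCard_ker_of_surjective hψ, Nat.card_zmod]
  simp [Module.finrank_pi_fintype]

theorem ncard_codes_mul_natCard_pow (he : LinearIndependent (ZMod p) e) (heC : ∀ i, e i ∈ C2) :
    {C : Submodule (ZMod (p ^ 2)) (ι → ZMod (p ^ 2)) | sorth (C : Set (ι → ZMod (p ^ 2))) ∧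
        res p '' (C : Set (ι → ZMod (p ^ 2))) = (span (ZMod p) (Set.range e) : Set (ι → ZMod p)) ∧
        iot p ⁻¹' (C : Set (ι → ZMod (p ^ 2))) = C2}.ncard * Nat.card C2 ^ Fintype.card κ =
      {x | sorth (liftCode p C2 e x : Set (ι → ZMod (p ^ 2)))}.ncard := by
  rw [setOf_codes_eq_image_liftCode p C2 he heC,
    ← ncard_eq_ncard_image_mul _ _ fun x hx => ?_]
  rw [← natCard_pi_univ, ← ncard_setOf_sub_mem _ x]
  congr 1
  ext x'
  change _ ↔ x' - x ∈ pi Set.univ fun _ => C2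
  rw [← liftCode_eq_liftCode_iff p C2 he heC]
  refine ⟨fun h => h.2, fun h => ⟨?_, h⟩⟩
  change sorth (liftCode p C2 e x' : Set (ι → ZMod (p ^ 2)))
  rwa [h]

end CodeCount

section AddTranspose

variable {R κ : Type} [AddCommGroup R] [LinearOrder κ] [Fintype κ]

/-- A solution `Y` is free above the diagonal and determined by `M` below it. -/
def addTransposeEquiv (M : κ → κ → R) (hM : ∀ i j, M i j = M j i) :
    {Y : κ → κ → R // ∀ i j, Y i j + Y j i = M i j} ≃
      ({q : κ × κ // q.1 < q.2} → R) × {d : κ → R // ∀ i, d i + d i = M i i} where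
  toFun Y := (fun q => Y.1 q.1.1 q.1.2, ⟨fun i => Y.1 i i, fun i => Y.2 i i⟩)
  invFun u := ⟨fun i j =>
      if h : i < j then u.1 ⟨(i, j), h⟩
      else if h' : j < i then M j i - u.1 ⟨(j, i), h'⟩
      else u.2.1 i, by
    intro i j
    dsimp only
    rcases lt_trichotomy i j with h | rfl | h
    · rw [dif_pos h, dif_neg (asymm h), dif_pos h, add_sub_cancel]
    · simp only [lt_irrefl, dite_false]
      exact u.2.2 i
    · rw [dif_neg (asymm h), dif_pos h, dif_pos h, hM, sub_add_cancel]⟩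
  left_inv Y := by
    ext i j
    rcases lt_trichotomy i j with h | rfl | h
    · simp only [dif_pos h]
    · simp only [lt_irrefl, dite_false]
    · simp only [dif_neg (asymm h), dif_pos h, ← Y.2 j i, add_sub_cancel_left]
  right_inv u := by
    ext q
    · simp only [dif_pos q.2]
    · simp only [lt_irrefl, dite_false]

theorem ncard_add_transpose_eq [Finite R] (M : κ → κ → R) (hM : ∀ i j, M i j = M j i) :
    {Y : κ → κ → R | ∀ i j, Y i j + Y j i = M i j}.ncard =
      Nat.card R ^ (Fintype.card κ).choose 2 * {d : κ → R | ∀ i, d i + d i = M i i}.ncard := by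
  classical
  have hpairs : Nat.card {q : κ × κ // q.1 < q.2} = (Fintype.card κ).choose 2 := by
    have h := Finset.card_product_filter_lt (s := (Finset.univ : Finset κ))
    rw [Finset.univ_product_univ, Finset.card_univ] at h
    rw [Nat.card_eq_fintype_card, Fintype.card_subtype, h]
  rw [← Nat.card_coe_set_eq, ← Nat.card_coe_set_eq]
  refine (Nat.card_congr (addTransposeEquiv M hM)).trans ?_
  rw [Nat.card_prod, Nat.card_fun, hpairs]
  rfl

end AddTranspose

theorem ncard_add_self_eq_one {K κ : Type} [Field K] (h2 : (2 : K) ≠ 0) (m : κ → K) :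
    {d : κ → K | ∀ i, d i + d i = m i}.ncard = 1 := by
  refine Set.ncard_eq_one.mpr ⟨fun i => m i / 2, Set.ext fun d => ?_⟩
  simp only [Set.mem_singleton_iff, funext_iff, ← two_mul, eq_div_iff h2, mul_comm (2 : K)]
  rfl

theorem ncard_add_self_eq_two_pow {κ : Type} [Fintype κ] {m : κ → ZMod 2} (hm : ∀ i, m i = 0) :
    {d : κ → ZMod 2 | ∀ i, d i + d i = m i}.ncard = 2 ^ Fintype.card κ := by
  simp only [hm, CharTwo.add_self_eq_zero, implies_true, Set.ofPred_true, Set.ncard_univ]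
  rw [Nat.card_fun, Nat.card_zmod, Nat.card_eq_fintype_card]

theorem lift_dotProduct_lift_self_two {ι : Type} [Fintype ι] (v : ι → ZMod 2) :
    lift 2 v ⬝ᵥ lift 2 v = ((Finset.univ.filter fun t => v t ≠ 0).card : ZMod (2 ^ 2)) := by
  have hsq : ∀ b : ZMod 2, (b.cast : ZMod (2 ^ 2)) * b.cast = if b ≠ 0 then 1 else 0 := by decide
  simp only [dotProduct, lift, hsq, Finset.sum_boole]

theorem divGram_self_eq_zero_of_two {ι κ : Type} [Fintype ι] {e : κ → ι → ZMod 2} {i : κ}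
    (h4 : 4 ∣ (Finset.univ.filter fun t => e i t ≠ 0).card) : divGram 2 e i i = 0 := by
  obtain ⟨c, hc⟩ := h4
  rw [divGram, lift_dotProduct_lift_self_two, hc, Nat.cast_mul,
    show ((4 : ℕ) : ZMod (2 ^ 2)) = 0 from ZMod.natCast_self _, zero_mul]
  rfl

theorem exponent_odd {n k1 k2 : ℕ} (h : k1 + k2 + k1 ≤ n) :
    k1 * (2 * n - 3 * k1 - 1 - 2 * k2) / 2 + k1 * (k1 + k2) =
      k1.choose 2 + (k1 * n - k1 * k1) := by
  obtain ⟨d, rfl⟩ := Nat.exists_eq_add_of_le h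
  rcases k1 with _ | k
  · simp
  have h1 : (k + 1) * (2 * (k + 1 + k2 + (k + 1) + d) - 3 * (k + 1) - 1 - 2 * k2) =
      (k + 1) * k + 2 * ((k + 1) * d) := by
    rw [show 2 * (k + 1 + k2 + (k + 1) + d) - 3 * (k + 1) - 1 - 2 * k2 = k + 2 * d by omega]
    ring
  have h2 : (k + 1) * (k + 1 + k2 + (k + 1) + d) - (k + 1) * (k + 1) =
      (k + 1) * d + (k + 1) * (k + 1 + k2) := by
    rw [Nat.sub_eq_iff_eq_add (Nat.mul_le_mul_left _ (by omega))]
    ring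
  rw [h1, Nat.add_mul_div_left _ _ two_pos, Nat.choose_two_right, h2, add_tsub_cancel_right]
  ring

theorem exponent_two {n k1 k2 : ℕ} (h : k1 + k2 + k1 ≤ n) :
    k1 * (2 * n - 3 * k1 + 1 - 2 * k2) / 2 + k1 * (k1 + k2) =
      k1.choose 2 + k1 + (k1 * n - k1 * k1) := by
  obtain ⟨d, rfl⟩ := Nat.exists_eq_add_of_le h
  have h1 : k1 * (2 * (k1 + k2 + k1 + d) - 3 * k1 + 1 - 2 * k2) =
      k1 * (k1 - 1) + 2 * (k1 + k1 * d) := by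
    rcases k1 with _ | k
    · simp
    rw [show 2 * (k + 1 + k2 + (k + 1) + d) - 3 * (k + 1) + 1 - 2 * k2 = k + 2 + 2 * d by omega,
      add_tsub_cancel_right]
    ring
  have h2 : k1 * (k1 + k2 + k1 + d) - k1 * k1 = k1 * d + k1 * (k1 + k2) := by
    rw [Nat.sub_eq_iff_eq_add (Nat.mul_le_mul_left _ (by omega))]
    ring
  rw [h1, Nat.add_mul_div_left _ _ two_pos, Nat.choose_two_right, h2]
  ring

theorem exists_linearIndependent_span_eq {K V : Type} [Field K] [AddCommGroup V] [Module K V]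
    {W : Submodule K V} [FiniteDimensional K W] {k : ℕ} (hW : Module.finrank K W = k) :
    ∃ e : Fin k → V, LinearIndependent K e ∧ span K (Set.range e) = W := by
  let b := Module.finBasisOfFinrankEq K W hW
  refine ⟨W.subtype ∘ b, b.linearIndependent.map' W.subtype W.ker_subtype, ?_⟩
  rw [Set.range_comp, span_image, b.span_eq, Submodule.map_top, range_subtype]

theorem stmt8_general (p n k1 k2 : ℕ) [Fact p.Prime]
    (C1 C2 : Submodule (ZMod p) (Fin n → ZMod p))
    (h12 : C1 ≤ C2)
    (h2d : (C2 : Set (Fin n → ZMod p)) ⊆ dualSet (C1 : Set (Fin n → ZMod p)))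
    (hdim1 : Module.finrank (ZMod p) C1 = k1)
    (hdim2 : Module.finrank (ZMod p) C2 = k1 + k2)
    (hde : p = 2 → doublyEven (C1 : Set (Fin n → ZMod p))) :
    {C : Submodule (ZMod (p ^ 2)) (Fin n → ZMod (p ^ 2)) |
        sorth (C : Set (Fin n → ZMod (p ^ 2))) ∧
        res p '' (C : Set (Fin n → ZMod (p ^ 2))) = (C1 : Set (Fin n → ZMod p)) ∧
        iot p ⁻¹' (C : Set (Fin n → ZMod (p ^ 2))) = (C2 : Set (Fin n → ZMod p))}.ncard
      = if p = 2 then 2 ^ (k1 * (2 * n - 3 * k1 + 1 - 2 * k2) / 2)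
        else p ^ (k1 * (2 * n - 3 * k1 - 1 - 2 * k2) / 2) := by
  obtain ⟨e, he, rfl⟩ := exists_linearIndependent_span_eq hdim1
  have heC : ∀ i, e i ∈ C2 := fun i => h12 (subset_span ⟨i, rfl⟩)
  have horth : ∀ c ∈ C2, ∀ i, c ⬝ᵥ e i = 0 := fun c hc i => h2d hc (e i) (subset_span ⟨i, rfl⟩)
  have hle : k1 + k2 + k1 ≤ n := by
    simpa [hdim2] using finrank_add_card_le_card he horth
  have hcount := ncard_codes_mul_natCard_pow p C2 he heC
  rw [ncard_sorth_liftCode p C2 he heC horth,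
    ncard_add_transpose_eq _ fun i j => by rw [divGram_comm],
    Module.natCard_eq_pow_finrank (K := ZMod p), hdim2, Nat.card_zmod, Fintype.card_fin,
    Fintype.card_fin, ← pow_mul, mul_comm (k1 + k2)] at hcount
  split_ifs with hp2
  · subst hp2
    rw [ncard_add_self_eq_two_pow fun i => by
        rw [divGram_self_eq_zero_of_two (hde rfl _ (subset_span ⟨i, rfl⟩)), neg_zero],
      Fintype.card_fin, ← pow_add, ← pow_add, ← exponent_two hle, pow_add] at hcount
    exact Nat.eq_of_mul_eq_mul_right (by positivity) hcount
  · rw [ncard_add_self_eq_one (Ring.two_ne_zero (by rwa [ZMod.ringChar_zmod_n])), mul_one,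
      ← pow_add, ← exponent_odd hle, pow_add] at hcount
    exact Nat.eq_of_mul_eq_mul_right (pow_pos (Fact.out : p.Prime).pos _) hcount

/-- if `C₁ ⊆ C₂ ⊆ C₁^⊥`, `dim C₁ = k₁`, `dim C₂ = k₁ + k₂` (with `C₁` doubly even
when `p = 2`), then the number of self-orthogonal codes `C` over `Z_{p^2}` with `π(C) = C₁` and
`ι⁻¹(C) = C₂` is `p^{k₁(2n−3k₁−1−2k₂)/2}` for odd `p` and `2^{k₁(2n−3k₁+1−2k₂)/2}` for `p = 2`. -/
theorem stmt8 (p n k1 k2 : ℕ) [Fact p.Prime] (hn : 0 < n)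
    (C1 C2 : Submodule (ZMod p) (Fin n → ZMod p))
    (h12 : C1 ≤ C2)
    (h2d : (C2 : Set (Fin n → ZMod p)) ⊆ dualSet (C1 : Set (Fin n → ZMod p)))
    (hdim1 : Module.finrank (ZMod p) C1 = k1)
    (hdim2 : Module.finrank (ZMod p) C2 = k1 + k2)
    (hde : p = 2 → doublyEven (C1 : Set (Fin n → ZMod p))) :
    {C : Submodule (ZMod (p ^ 2)) (Fin n → ZMod (p ^ 2)) |
        sorth (C : Set (Fin n → ZMod (p ^ 2))) ∧
        res p '' (C : Set (Fin n → ZMod (p ^ 2))) = (C1 : Set (Fin n → ZMod p)) ∧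
        iot p ⁻¹' (C : Set (Fin n → ZMod (p ^ 2))) = (C2 : Set (Fin n → ZMod p))}.ncard
      = if p = 2 then 2 ^ (k1 * (2 * n - 3 * k1 + 1 - 2 * k2) / 2)
        else p ^ (k1 * (2 * n - 3 * k1 - 1 - 2 * k2) / 2) :=
  stmt8_general p n k1 k2 C1 C2 h12 h2d hdim1 hdim2 hde

end Paper
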